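/- arXiv:2405.01291 — 3 statements merged into one kernel-verified Lean document; each statement's English description precedes it below -/
import Mathlib

section
/- Let H be a finite-dimensional complex vector space with a real structure σ, let k ≥ 0 be an integer, and let H = F^0 ⊇ F^1 ⊇ ⋯ ⊇ F^k ⊇ F^{k+1} = 0 be a decreasing filtration by linear subspaces (with the convention F^p = H for p < 0 and F^p = 0 for p > k+1). For p ∈ ℤ set H^{p,k−p} := F^p ∩ σ(F^{k−p}). Then the following are equivalent: (i) H = ⊕_{p=0}^{k} H^{p,k−p} and σ(H^{p,k−p}) = H^{k−p,p} for all 0 ≤ p ≤ k (the subspaces H^{p,k−p} define a pure Hodge structure of weight k on H); (ii) H = F^p ⊕ σ(F^{k−p+1}) for all p ∈ ℤ (the filtration F^• is k-opposed). -/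
open Module

/- A real structure on a finite-dimensional ℂ-vector space `H` is a conjugate-linear
involution `σ`, modeled as a `starRingEnd ℂ`-semilinear endomorphism with `σ ∘ σ = id`.
For a subspace `S`, `σ(S)` is `S.map σ`. -/

instance : RingHomSurjective (starRingEnd ℂ) := ⟨fun x => ⟨star x, by simp⟩⟩

section Aux

variable {H : Type*} [AddCommGroup H] [Module ℂ H] [FiniteDimensional ℂ H]

theorem mem_mapσ_aux (σ : H →ₛₗ[starRingEnd ℂ] H) (hσ : ∀ v, σ (σ v) = v)
    {S : Submodule ℂ H} {x : H} : x ∈ S.map σ ↔ σ x ∈ S := by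
  constructor
  · rintro ⟨y, hy, rfl⟩; rwa [hσ]
  · intro h; exact ⟨σ x, h, hσ x⟩

theorem mapσ_mapσ_aux (σ : H →ₛₗ[starRingEnd ℂ] H) (hσ : ∀ v, σ (σ v) = v)
    (S : Submodule ℂ H) : (S.map σ).map σ = S := by
  ext x; rw [mem_mapσ_aux σ hσ, mem_mapσ_aux σ hσ, hσ]

theorem mapσ_inf_aux (σ : H →ₛₗ[starRingEnd ℂ] H) (hσ : ∀ v, σ (σ v) = v)
    (S T : Submodule ℂ H) : (S ⊓ T).map σ = S.map σ ⊓ T.map σ := by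
  ext x
  simp only [Submodule.mem_inf, mem_mapσ_aux σ hσ]

theorem mapσ_top_aux (σ : H →ₛₗ[starRingEnd ℂ] H) (hσ : ∀ v, σ (σ v) = v) :
    (⊤ : Submodule ℂ H).map σ = ⊤ := by
  ext x; simp only [Submodule.mem_top, iff_true, mem_mapσ_aux σ hσ]

theorem finrank_mapσ_aux (σ : H →ₛₗ[starRingEnd ℂ] H) (hσ : ∀ v, σ (σ v) = v)
    (S : Submodule ℂ H) : finrank ℂ (S.map σ) = finrank ℂ S := by
  have hrank : Module.rank ℂ S = Module.rank ℂ (S.map σ) := by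
    refine rank_eq_of_equiv_equiv (ZeroHom.mk (fun z => starRingEnd ℂ z) (by simp))
      { toFun := fun x => ⟨σ x, (mem_mapσ_aux σ hσ).2 (by rw [hσ]; exact x.2)⟩
        invFun := fun y => ⟨σ y, (mem_mapσ_aux σ hσ).1 y.2⟩
        left_inv := fun x => by ext; exact hσ x
        right_inv := fun y => by ext; exact hσ y
        map_add' := fun x y => by ext; exact σ.map_add x y }
      ⟨fun a b hab => by simpa using congrArg (starRingEnd ℂ) hab,
        fun z => ⟨starRingEnd ℂ z, by simp⟩⟩
      (fun r m => by ext; exact σ.map_smulₛₗ r m)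
  rw [Module.finrank, Module.finrank, hrank]

theorem finrank_finset_sup_eq_sum_aux {ι : Type*} (s : Finset ι) (W : ι → Submodule ℂ H)
    (h : s.SupIndep W) :
    finrank ℂ (s.sup W : Submodule ℂ H) = ∑ i ∈ s, finrank ℂ (W i) := by
  classical
  induction s using Finset.cons_induction with
  | empty => simp
  | cons a s ha ih =>
    have hs : s.SupIndep W := h.subset (Finset.subset_cons ha)
    have hd : Disjoint (W a) (s.sup W) := by
      have := (Finset.supIndep_iff_disjoint_erase.mp h) a (Finset.mem_cons_self a s)
      rwa [Finset.erase_cons ha] at this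
    have h2 := Submodule.finrank_sup_add_finrank_inf_eq (W a) (s.sup W)
    rw [hd.eq_bot] at h2
    rw [Finset.sup_cons, Finset.sum_cons, ← ih hs]
    simpa using h2

end Aux

/-- **Proposition 2.1.** Equivalence of the Hodge decomposition and the `k`-opposedness of a
decreasing filtration `F^•` with `F^0 = H` and `F^{k+1} = 0`, where
`H^{p,k-p} := F^p ∩ σ(F^{k-p})`. -/
theorem pure_hodge_iff_k_opposed
    (H : Type*) [AddCommGroup H] [Module ℂ H] [FiniteDimensional ℂ H]
    (σ : H →ₛₗ[starRingEnd ℂ] H) (hσinv : ∀ v, σ (σ v) = v)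
    (k : ℕ) (F : ℤ → Submodule ℂ H)
    (hFanti : ∀ p q : ℤ, p ≤ q → F q ≤ F p)
    (hFbot : ∀ p : ℤ, p ≤ 0 → F p = ⊤)
    (hFtop : ∀ p : ℤ, (k : ℤ) + 1 ≤ p → F p = ⊥) :
    -- (i) the subspaces `H^{p,k-p}`, `0 ≤ p ≤ k`, define a pure Hodge structure of weight `k`
    ((iSupIndep fun p : Fin (k + 1) =>
        F (p : ℤ) ⊓ (F ((k : ℤ) - (p : ℤ))).map σ) ∧
      (⨆ p : Fin (k + 1), F (p : ℤ) ⊓ (F ((k : ℤ) - (p : ℤ))).map σ) = ⊤ ∧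
      (∀ p : Fin (k + 1),
        (F (p : ℤ) ⊓ (F ((k : ℤ) - (p : ℤ))).map σ).map σ =
          F ((k : ℤ) - (p : ℤ)) ⊓ (F (p : ℤ)).map σ))
    ↔
    -- (ii) the filtration `F^•` is `k`-opposed
    (∀ p : ℤ, IsCompl (F p) ((F ((k : ℤ) - p + 1)).map σ)) := by
  classical
  set G : Fin (k + 1) → Submodule ℂ H :=
    fun p => F (p : ℤ) ⊓ (F ((k : ℤ) - (p : ℤ))).map σ with hG
  constructor
  · -- (i) → (ii)
    rintro ⟨hind, hsup, -⟩
    set n := finrank ℂ H with hn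
    set d : Fin (k + 1) → ℕ := fun i => finrank ℂ (G i) with hd
    set rev : Fin (k + 1) → Fin (k + 1) := fun i => ⟨k - (i : ℕ), by omega⟩ with hrevdef
    have hrev : ∀ i : Fin (k + 1), (G i).map σ = G (rev i) := by
      intro i
      have hik : (i : ℕ) ≤ k := by omega
      have h1 : ((k - (i : ℕ) : ℕ) : ℤ) = (k : ℤ) - ((i : ℕ) : ℤ) := by omega
      show (F (i : ℤ) ⊓ (F ((k : ℤ) - (i : ℤ))).map σ).map σ =
        F ((rev i : ℕ) : ℤ) ⊓ (F ((k : ℤ) - ((rev i : ℕ) : ℤ))).map σ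
      rw [mapσ_inf_aux σ hσinv, mapσ_mapσ_aux σ hσinv]
      rw [show ((rev i : ℕ) : ℤ) = ((k - (i : ℕ) : ℕ) : ℤ) from rfl, h1,
        show (k : ℤ) - ((k : ℤ) - ((i : ℕ) : ℤ)) = ((i : ℕ) : ℤ) by ring]
      exact inf_comm _ _
    have hdrev : ∀ i, d (rev i) = d i := by
      intro i
      show finrank ℂ (G (rev i)) = finrank ℂ (G i)
      rw [← hrev i, finrank_mapσ_aux σ hσinv]
    have hrevrev : ∀ i, rev (rev i) = i := by
      intro i
      apply Fin.ext
      show k - (k - (i : ℕ)) = (i : ℕ)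
      omega
    -- the finsets of indices ≥ q
    set T : ℕ → Finset (Fin (k + 1)) :=
      fun q => Finset.univ.filter (fun i : Fin (k + 1) => q ≤ (i : ℕ)) with hT
    set s : ℕ → ℕ := fun q => ∑ i ∈ T q, d i with hs
    have hfinsum : ∀ q : ℕ, finrank ℂ ((T q).sup G : Submodule ℂ H) = s q :=
      fun q => finrank_finset_sup_eq_sum_aux (T q) G (hind.supIndep' _)
    -- lower bound
    have hsle : ∀ q : ℕ, s q ≤ finrank ℂ (F (q : ℤ)) := by
      intro q
      rw [← hfinsum q]
      refine Submodule.finrank_mono (Finset.sup_le fun i hi => ?_)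
      have hqi : q ≤ (i : ℕ) := (Finset.mem_filter.1 hi).2
      exact inf_le_left.trans (hFanti _ _ (by omega))
    -- total
    have htotal : s 0 = n := by
      have hT0 : T 0 = Finset.univ := by
        ext i; simp [hT]
      have h1 : (T 0).sup G = ⊤ := by
        rw [hT0, Finset.sup_eq_iSup]
        simpa using hsup
      have := hfinsum 0
      rw [h1, finrank_top] at this
      exact this.symm
    -- complement identity
    have hcompl : ∀ q : ℕ, q ≤ k + 1 → s q + s (k + 1 - q) = n := by
      intro q hq
      have h2 : s (k + 1 - q) =
          ∑ i ∈ Finset.univ.filter (fun i : Fin (k + 1) => ¬ q ≤ (i : ℕ)), d i := by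
        show ∑ i ∈ T (k + 1 - q), d i = _
        refine Finset.sum_nbij' (fun i => rev i) (fun i => rev i) ?_ ?_ ?_ ?_ ?_
        · intro i hi
          simp only [hT, Finset.mem_filter, Finset.mem_univ, true_and, not_le] at hi ⊢
          have hik := i.isLt
          show k - (i : ℕ) < q
          omega
        · intro i hi
          simp only [hT, Finset.mem_filter, Finset.mem_univ, true_and, not_le] at hi ⊢
          have hik := i.isLt
          show k + 1 - q ≤ k - (i : ℕ)
          omega
        · intro i _; exact hrevrev i
        · intro i _; exact hrevrev i
        · intro i _; exact (hdrev i).symm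
      rw [h2]
      rw [show s q = ∑ i ∈ Finset.univ.filter (fun i : Fin (k + 1) => q ≤ (i : ℕ)), d i from rfl]
      rw [Finset.sum_filter_add_sum_filter_not]
      rw [← htotal]
      show ∑ i ∈ Finset.univ, d i = ∑ i ∈ T 0, d i
      have hT0 : T 0 = Finset.univ := by ext i; simp [hT]
      rw [hT0]
    -- the step identity : s (k - q) = d ⟨q⟩ + s (k + 1 - q) for q ≤ k
    have hstep : ∀ q : ℕ, (hqk : q ≤ k) → s (k - q) = d ⟨q, Nat.lt_succ_of_le hqk⟩ + s (k + 1 - q) := by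
      intro q hqk
      have hmem : (⟨k - q, by omega⟩ : Fin (k + 1)) ∉ T (k + 1 - q) := by
        simp only [hT, Finset.mem_filter, Finset.mem_univ, true_and]
        show ¬ (k + 1 - q ≤ k - q)
        omega
      have hins : T (k - q) = insert (⟨k - q, by omega⟩ : Fin (k + 1)) (T (k + 1 - q)) := by
        ext i
        simp only [hT, Finset.mem_filter, Finset.mem_univ, true_and, Finset.mem_insert,
          Fin.ext_iff]
        show k - q ≤ (i : ℕ) ↔ (i : ℕ) = k - q ∨ k + 1 - q ≤ (i : ℕ)
        omega
      show ∑ i ∈ T (k - q), d i = d ⟨q, Nat.lt_succ_of_le hqk⟩ + ∑ i ∈ T (k + 1 - q), d i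
      rw [hins, Finset.sum_insert hmem]
      congr 1
      have : (⟨k - q, by omega⟩ : Fin (k + 1)) = rev ⟨q, by omega⟩ := rfl
      rw [this, hdrev]
    -- upper bound
    have hub : ∀ q : ℕ, (hqk : q ≤ k) →
        finrank ℂ (F (q : ℤ)) + finrank ℂ (F ((k - q : ℕ) : ℤ)) ≤
          n + d ⟨q, Nat.lt_succ_of_le hqk⟩ := by
      intro q hqk
      have hcast : ((k - q : ℕ) : ℤ) = (k : ℤ) - (q : ℤ) := by omega
      have h4 := Submodule.finrank_sup_add_finrank_inf_eq (F (q : ℤ))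
        ((F ((k : ℤ) - (q : ℤ))).map σ)
      have h5 : finrank ℂ ((F ((k : ℤ) - (q : ℤ))).map σ) = finrank ℂ (F ((k - q : ℕ) : ℤ)) := by
        rw [finrank_mapσ_aux σ hσinv, hcast]
      have h6 : finrank ℂ (F (q : ℤ) ⊓ (F ((k : ℤ) - (q : ℤ))).map σ : Submodule ℂ H)
          = d ⟨q, Nat.lt_succ_of_le hqk⟩ := rfl
      rw [h5, h6] at h4
      have h7 : finrank ℂ (F (q : ℤ) ⊔ (F ((k : ℤ) - (q : ℤ))).map σ : Submodule ℂ H) ≤ n :=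
        Submodule.finrank_le _
      omega
    -- equality f q = s q
    have feq : ∀ q : ℕ, q ≤ k + 1 → finrank ℂ (F (q : ℤ)) = s q := by
      intro q hq
      rcases Nat.lt_or_ge q (k + 1) with hlt | hge
      · have hqk : q ≤ k := by omega
        have e1 := hsle q
        have e2 := hsle (k - q)
        have e3 := hub q hqk
        have e4 := hstep q hqk
        have e5 := hcompl q (by omega)
        omega
      · have hq' : q = k + 1 := by omega
        subst hq'
        have h1 : F ((k + 1 : ℕ) : ℤ) = ⊥ := hFtop _ (by push_cast; omega)
        have h2 : T (k + 1) = ∅ := by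
          ext i
          simp only [hT, Finset.mem_filter, Finset.mem_univ, true_and, Finset.notMem_empty,
            iff_false]
          omega
        rw [h1]
        rw [show s (k + 1) = ∑ i ∈ T (k + 1), d i from rfl, h2]
        simp
    -- now prove IsCompl for every integer p
    intro p
    rcases le_or_gt p 0 with hp0 | hp0
    · rw [hFbot p hp0, hFtop ((k : ℤ) - p + 1) (by omega), Submodule.map_bot]
      exact isCompl_top_bot
    rcases le_or_gt ((k : ℤ) + 1) p with hpk | hpk
    · rw [hFtop p hpk, hFbot ((k : ℤ) - p + 1) (by omega), mapσ_top_aux σ hσinv]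
      exact isCompl_bot_top
    -- main case : 1 ≤ p ≤ k
    set q : ℕ := p.toNat with hqdef
    have hq1k : 1 ≤ q ∧ q ≤ k := by omega
    have hpq : p = (q : ℤ) := by omega
    rw [hpq, show (k : ℤ) - (q : ℤ) + 1 = ((k + 1 - q : ℕ) : ℤ) by omega]
    set q' : ℕ := k + 1 - q with hq'def
    -- codisjointness
    have hcod : F ((q : ℕ) : ℤ) ⊔ (F ((q' : ℕ) : ℤ)).map σ = ⊤ := by
      rw [eq_top_iff, ← hsup]
      refine iSup_le fun i => ?_
      rcases le_or_gt q (i : ℕ) with h | h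
      · exact le_sup_left.trans' (inf_le_left.trans (hFanti _ _ (by omega)))
      · refine le_sup_right.trans' (inf_le_right.trans (Submodule.map_mono (hFanti _ _ ?_)))
        have : (i : ℕ) ≤ k := by omega
        omega
    have hfr : finrank ℂ (F ((q : ℕ) : ℤ)) + finrank ℂ ((F ((q' : ℕ) : ℤ)).map σ) = n := by
      rw [finrank_mapσ_aux σ hσinv, feq q (by omega), feq q' (by omega)]
      exact hcompl q (by omega)
    have h5 := Submodule.finrank_sup_add_finrank_inf_eq (F ((q : ℕ) : ℤ))
      ((F ((q' : ℕ) : ℤ)).map σ)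
    rw [hcod, finrank_top, hfr] at h5
    have h6 : finrank ℂ (F ((q : ℕ) : ℤ) ⊓ (F ((q' : ℕ) : ℤ)).map σ : Submodule ℂ H) = 0 := by
      omega
    have h7 : F ((q : ℕ) : ℤ) ⊓ (F ((q' : ℕ) : ℤ)).map σ = ⊥ :=
      Submodule.finrank_eq_zero.mp h6
    exact ⟨disjoint_iff.2 h7, codisjoint_iff.2 hcod⟩
  · -- (ii) → (i)
    intro hop
    have hopd : ∀ p : ℤ, Disjoint (F p) ((F ((k : ℤ) - p + 1)).map σ) := fun p => (hop p).1
    have hopc : ∀ p : ℤ, F p ⊔ (F ((k : ℤ) - p + 1)).map σ = ⊤ :=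
      fun p => codisjoint_iff.1 (hop p).2
    refine ⟨?_, ?_, ?_⟩
    · -- independence
      intro p
      have hle : (⨆ (j : Fin (k + 1)) (_ : j ≠ p), G j) ≤
          F ((p : ℤ) + 1) ⊔ (F ((k : ℤ) - (p : ℤ) + 1)).map σ := by
        refine iSup_le fun j => iSup_le fun hj => ?_
        have hne : (j : ℕ) ≠ (p : ℕ) := fun h => hj (Fin.ext h)
        rcases hne.lt_or_gt with hlt | hgt
        · exact le_sup_right.trans'
            (inf_le_right.trans (Submodule.map_mono (hFanti _ _ (by omega))))
        · exact le_sup_left.trans' (inf_le_left.trans (hFanti _ _ (by omega)))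
      refine Submodule.disjoint_def.mpr fun x hxG hxS => ?_
      rcases Submodule.mem_sup.1 (hle hxS) with ⟨a, ha, b, hb, hx⟩
      have hb' : b ∈ (F ((k : ℤ) - (p : ℤ))).map σ :=
        Submodule.map_mono (hFanti _ _ (by omega)) hb
      have haF : a ∈ (F ((k : ℤ) - (p : ℤ))).map σ := by
        have hxa : a = x - b := by rw [← hx]; abel
        rw [hxa]
        exact Submodule.sub_mem _ hxG.2 hb'
      have ha0 : a = 0 := by
        have hd := hopd ((p : ℤ) + 1)
        rw [show (k : ℤ) - ((p : ℤ) + 1) + 1 = (k : ℤ) - (p : ℤ) by ring] at hd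
        exact Submodule.disjoint_def.1 hd a ha haF
      have hxb : x = b := by rw [← hx, ha0, zero_add]
      have hb0 : b = 0 := by
        refine Submodule.disjoint_def.1 (hopd (p : ℤ)) b ?_ hb
        rw [← hxb]; exact hxG.1
      rw [hxb, hb0]
    · -- sup = ⊤
      have key : ∀ m : ℕ, m ≤ k + 1 → F ((k : ℤ) + 1 - m) ≤ ⨆ j, G j := by
        intro m
        induction m with
        | zero =>
          intro _
          rw [show (k : ℤ) + 1 - (0 : ℕ) = (k : ℤ) + 1 by push_cast; ring,
            hFtop ((k : ℤ) + 1) le_rfl]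
          exact bot_le
        | succ m ih =>
          intro hm1
          have hmk : m ≤ k := by omega
          intro v hv
          rw [show (k : ℤ) + 1 - ((m + 1 : ℕ) : ℤ) = (k : ℤ) - (m : ℕ) by push_cast; ring] at hv
          have hcod := hopc ((k : ℤ) - (m : ℕ) + 1)
          rw [show (k : ℤ) - ((k : ℤ) - (m : ℕ) + 1) + 1 = ((m : ℕ) : ℤ) by ring] at hcod
          have hvs : v ∈ F ((k : ℤ) - (m : ℕ) + 1) ⊔ (F ((m : ℕ) : ℤ)).map σ := by
            rw [hcod]; trivial
          rcases Submodule.mem_sup.1 hvs with ⟨a, ha, b, hb, hx⟩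
          have haS : a ∈ ⨆ j, G j := by
            refine ih (by omega) ?_
            rw [show (k : ℤ) + 1 - ((m : ℕ) : ℤ) = (k : ℤ) - (m : ℕ) + 1 by ring]
            exact ha
          have hbF : b ∈ F ((k : ℤ) - (m : ℕ)) := by
            have hxb : b = v - a := by rw [← hx]; abel
            rw [hxb]
            exact Submodule.sub_mem _ hv (hFanti _ _ (by omega) ha)
          have hGeq : G ⟨k - m, by omega⟩ =
              F ((k : ℤ) - (m : ℕ)) ⊓ (F ((m : ℕ) : ℤ)).map σ := by
            have h1 : ((k - m : ℕ) : ℤ) = (k : ℤ) - (m : ℕ) := by omega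
            show F (((k - m : ℕ) : ℤ)) ⊓ (F ((k : ℤ) - ((k - m : ℕ) : ℤ))).map σ = _
            rw [h1, show (k : ℤ) - ((k : ℤ) - (m : ℕ)) = ((m : ℕ) : ℤ) by ring]
          have hbS : b ∈ ⨆ j, G j := by
            refine le_iSup G ⟨k - m, by omega⟩ ?_
            rw [hGeq]
            exact ⟨hbF, hb⟩
          rw [← hx]
          exact Submodule.add_mem _ haS hbS
      rw [eq_top_iff]
      have h0 : F 0 = ⊤ := hFbot 0 le_rfl
      have hk1 := key (k + 1) le_rfl
      rw [show (k : ℤ) + 1 - ((k + 1 : ℕ) : ℤ) = 0 by push_cast; ring, h0] at hk1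
      exact hk1
    · -- σ-symmetry
      intro p
      rw [mapσ_inf_aux σ hσinv, mapσ_mapσ_aux σ hσinv]
      exact inf_comm _ _
end

section
/- Let H be a finite-dimensional complex vector space with a real structure σ, let k ≥ 0 be an integer, and let H = F^0 ⊇ F^1 ⊇ ⋯ ⊇ F^k ⊇ F^{k+1} = 0 be a decreasing filtration by linear subspaces (with F^p = H for p < 0 and F^p = 0 for p > k+1). Assume the filtration is k-opposed, i.e. H = F^p ⊕ σ(F^{k−p+1}) for all p ∈ ℤ. Then for every p ∈ ℤ one has the internal direct sum decomposition F^p = F^{p+1} ⊕ H^{p,k−p}, where H^{p,k−p} := F^p ∩ σ(F^{k−p}). -/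
/-- **Claim 2.2.** If the filtration `F^•` (with `F^0 = H`, `F^{k+1} = 0`) is `k`-opposed,
then for every `p` one has the internal direct sum decomposition
`F^p = F^{p+1} ⊕ H^{p,k-p}` where `H^{p,k-p} := F^p ∩ σ(F^{k-p})`. -/
theorem k_opposed_graded_decomposition
    (H : Type*) [AddCommGroup H] [Module ℂ H] [FiniteDimensional ℂ H]
    (σ : H →ₛₗ[starRingEnd ℂ] H) (hσinv : ∀ v, σ (σ v) = v)
    (k : ℕ) (F : ℤ → Submodule ℂ H)
    (hFanti : ∀ p q : ℤ, p ≤ q → F q ≤ F p)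
    (hFbot : ∀ p : ℤ, p ≤ 0 → F p = ⊤)
    (hFtop : ∀ p : ℤ, (k : ℤ) + 1 ≤ p → F p = ⊥)
    (hopp : ∀ p : ℤ, IsCompl (F p) ((F ((k : ℤ) - p + 1)).map σ)) :
    ∀ p : ℤ,
      Disjoint (F (p + 1)) (F p ⊓ (F ((k : ℤ) - p)).map σ) ∧
      F (p + 1) ⊔ (F p ⊓ (F ((k : ℤ) - p)).map σ) = F p := by
  intro p
  have hc := hopp (p + 1)
  have hidx : (k : ℤ) - (p + 1) + 1 = (k : ℤ) - p := by ring
  rw [hidx] at hc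
  constructor
  · exact hc.disjoint.mono_right inf_le_right
  · apply le_antisymm
    · exact sup_le (hFanti p (p + 1) (by omega)) inf_le_left
    · intro v hv
      have htop : F (p + 1) ⊔ (F ((k : ℤ) - p)).map σ = ⊤ :=
        hc.codisjoint.eq_top
      have : v ∈ F (p + 1) ⊔ (F ((k : ℤ) - p)).map σ := by rw [htop]; trivial
      obtain ⟨a, ha, b, hb, hab⟩ := Submodule.mem_sup.mp this
      have hbF : b ∈ F p := by
        have : b = v - a := by rw [← hab]; abel
        rw [this]
        exact Submodule.sub_mem _ hv (hFanti p (p + 1) (by omega) ha)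
      exact Submodule.mem_sup.mpr ⟨a, ha, b, ⟨hbF, hb⟩, hab⟩
end

section
/- Let H be a finite-dimensional complex vector space with a real structure σ, and let (W_•, F^•) be a mixed Hodge structure on (H, σ). For p, q ∈ ℤ define the Deligne subspace I^{p,q} := F^p ∩ W_{p+q} ∩ ( σ(F^q) ∩ W_{p+q} + Σ_{j≥2} σ(F^{q−j+1}) ∩ W_{p+q−j} ). Then for every k ∈ ℤ one has W_k = ⊕_{p+q ≤ k} I^{p,q}, and for every p ∈ ℤ one has F^p = ⊕_{r ≥ p, q ∈ ℤ} I^{r,q} (internal direct sums in H). -/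
/-- A mixed Hodge structure on `(H, σ)`: an increasing filtration `W` by `σ`-stable
subspaces, exhaustive and separated, and a decreasing filtration `F`, exhaustive and
separated, such that for every `j` the filtration induced by `F` on `Gr^W_j = W_j/W_{j-1}`
is `j`-opposed for the conjugation induced by `σ`.  The last two fields express, purely in
terms of subspaces of `H`, that the images of `F^p ∩ W_j` and `σ(F^{j-p+1}) ∩ W_j` in
`W_j/W_{j-1}` span the quotient and intersect trivially, i.e. `j`-opposedness of the
induced filtration on `Gr^W_j`. -/
structure IsMixedHodgeStructure {H : Type*} [AddCommGroup H] [Module ℂ H]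
    (σ : H →ₛₗ[starRingEnd ℂ] H)
    (W : ℤ → Submodule ℂ H) (F : ℤ → Submodule ℂ H) : Prop where
  w_mono : Monotone W
  w_stable : ∀ j : ℤ, (W j).map σ = W j
  w_bot : ∃ a : ℤ, ∀ j : ℤ, j ≤ a → W j = ⊥
  w_top : ∃ b : ℤ, ∀ j : ℤ, b ≤ j → W j = ⊤
  f_anti : ∀ p q : ℤ, p ≤ q → F q ≤ F p
  f_top : ∃ a : ℤ, ∀ p : ℤ, p ≤ a → F p = ⊤
  f_bot : ∃ b : ℤ, ∀ p : ℤ, b ≤ p → F p = ⊥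
  gr_opposed_sup : ∀ j p : ℤ,
    (F p ⊓ W j) ⊔ ((F (j - p + 1)).map σ ⊓ W j) ⊔ W (j - 1) = W j
  gr_opposed_inf : ∀ j p : ℤ,
    ((F p ⊓ W j) ⊔ W (j - 1)) ⊓ (((F (j - p + 1)).map σ ⊓ W j) ⊔ W (j - 1)) ≤ W (j - 1)

/-- The Deligne subspace
`I^{p,q} = F^p ∩ W_{p+q} ∩ (σ(F^q) ∩ W_{p+q} + Σ_{j ≥ 2} σ(F^{q-j+1}) ∩ W_{p+q-j})`. -/
def deligneI {H : Type*} [AddCommGroup H] [Module ℂ H]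
    (σ : H →ₛₗ[starRingEnd ℂ] H) (W F : ℤ → Submodule ℂ H) (p q : ℤ) : Submodule ℂ H :=
  F p ⊓ W (p + q) ⊓
    ((F q).map σ ⊓ W (p + q) ⊔
      ⨆ j : ℤ, ⨆ _ : 2 ≤ j, (F (q - j + 1)).map σ ⊓ W (p + q - j))

/-!
Deligne's construction makes sense for any three filtrations `W`, `F`, `G` of a modular lattice
such that `F` and `G` induce `n`-opposed filtrations on every `Gr^W_n = W_n / W_{n-1}`; here
`G = σ(F)`. On `Gr^W_n` the pieces `H^{p,n-p} = F^p ∩ G^{n-p}`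
form a direct sum decomposition, and the theorem follows by induction on the weight `n`.

Once `W_{n-1}` is spanned by the `I^{r,s}` with `r + s < n`, write it as `U + V` with `U` the
summands with `r ≥ p` (contained in `F^p`) and `V` those with `r < p` (contained in the second
factor of `I^{p,q}`). The modular law then shows that every class of `H^{p,q}` has a
representative in `I^{p,q}`, which gives the spanning statements at weight `n`. Moreover
`I^{p,q} ∩ W_{n-1}` lies both in the span of the lower summands with `r ≥ p` (through `F^p`) and
in that of those with `r < p` (through the second factor), so it vanishes by independence in
lower weight; independence at weight `n` then follows from that of the `H^{p,q}` in `Gr^W_n`.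
-/

section ModularLattice

variable {α : Type*} [Lattice α] [IsModularLattice α]

theorem sup_inf_sup_eq_of_le_of_le {a b u v : α} (hu : u ≤ a) (hv : v ≤ b) :
    (a ⊔ v) ⊓ (b ⊔ u) = a ⊓ b ⊔ (u ⊔ v) := calc
  (a ⊔ v) ⊓ (b ⊔ u) = u ⊔ (v ⊔ a) ⊓ b := by
    rw [inf_comm, sup_comm b, sup_inf_assoc_of_le _ (le_sup_of_le_left hu), sup_comm a,
      inf_comm]
  _ = a ⊓ b ⊔ (u ⊔ v) := by rw [sup_inf_assoc_of_le _ hv, ← sup_assoc, sup_comm]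

theorem le_sup_sup_inf_of_le {a x j w : α} (hax : a ≤ x ⊔ w) (hxa : x ≤ a ⊔ j) (hjw : j ≤ w) :
    a ≤ x ⊔ j ⊔ a ⊓ w := calc
  a ≤ (x ⊔ j ⊔ w) ⊓ (a ⊔ j) :=
    le_inf (hax.trans (sup_le_sup_right le_sup_left w)) le_sup_left
  _ = x ⊔ j ⊔ (j ⊔ a) ⊓ w := by
    rw [sup_inf_assoc_of_le _ (sup_le hxa le_sup_right), inf_comm, sup_comm a]
  _ = x ⊔ j ⊔ a ⊓ w := by rw [sup_inf_assoc_of_le _ hjw, ← sup_assoc, sup_assoc x, sup_idem]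

end ModularLattice

section CompleteLattice

variable {α : Type*} [CompleteLattice α]

theorem iSupIndep_of_disjoint_iSup_le [IsModularLattice α] [IsCompactlyGenerated α]
    {ι β : Type*} [LinearOrder β] {f : ι → α} (w : ι → β)
    (h : ∀ i, Disjoint (f i) (⨆ j, ⨆ (_ : j ≠ i ∧ w j ≤ w i), f j)) : iSupIndep f := by
  classical
  refine iSupIndep_iff_supIndep.mpr fun s => ?_
  induction s using Finset.induction_on_max_value w with
  | empty => exact Finset.supIndep_empty f
  | insert a s ha hmax ih =>
    refine ih.insert ((h a).mono_right ?_)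
    rw [Finset.sup_eq_iSup]
    exact iSup₂_mono' fun j hj => ⟨j, ⟨ne_of_mem_of_not_mem hj ha, hmax j hj⟩, le_rfl⟩

/-- The pieces `A p ⊓ B (k - p)` play the role of the Hodge components `H^{p, k-p}`. -/
structure OpposedFiltrations (lo hi : α) (k : ℤ) (A B : ℤ → α) : Prop where
  antitone_left : Antitone A
  antitone_right : Antitone B
  sup_eq : ∀ p, A p ⊔ B (k - p + 1) = hi
  inf_eq : ∀ p, A p ⊓ B (k - p + 1) = lo

namespace OpposedFiltrations

variable {lo hi : α} {k : ℤ} {A B : ℤ → α}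

theorem symm (h : OpposedFiltrations lo hi k A B) : OpposedFiltrations lo hi k B A where
  antitone_left := h.antitone_right
  antitone_right := h.antitone_left
  sup_eq q := by rw [sup_comm, ← h.sup_eq (k - q + 1)]; congr 2; ring
  inf_eq q := by rw [inf_comm, ← h.inf_eq (k - q + 1)]; congr 2; ring

theorem le_left (h : OpposedFiltrations lo hi k A B) (p : ℤ) : lo ≤ A p :=
  h.inf_eq p ▸ inf_le_left

theorem sup_eq_succ (h : OpposedFiltrations lo hi k A B) (p : ℤ) :
    A (p + 1) ⊔ B (k - p) = hi := by
  rw [← h.sup_eq (p + 1)]; congr 2; ring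

theorem inf_eq_succ (h : OpposedFiltrations lo hi k A B) (p : ℤ) :
    A (p + 1) ⊓ B (k - p) = lo := by
  rw [← h.inf_eq (p + 1)]; congr 2; ring

variable [IsModularLattice α]

theorem eq_inf_sup_succ (h : OpposedFiltrations lo hi k A B) (p : ℤ) :
    A p = A p ⊓ B (k - p) ⊔ A (p + 1) := calc
  A p = (A (p + 1) ⊔ B (k - p)) ⊓ A p := by
    rw [h.sup_eq_succ, inf_eq_right.mpr (h.sup_eq p ▸ le_sup_left)]
  _ = A p ⊓ B (k - p) ⊔ A (p + 1) := by
    rw [sup_inf_assoc_of_le _ (h.antitone_left (Int.le_add_one le_rfl)), sup_comm, inf_comm]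

theorem eq_iSup_inf {b : ℤ} (h : OpposedFiltrations lo hi k A B) (hb : A b ≤ lo) (p : ℤ) :
    A p = ⨆ r, ⨆ (_ : p ≤ r), A r ⊓ B (k - r) := by
  refine le_antisymm ?_ (iSup₂_le fun r hr => inf_le_left.trans (h.antitone_left hr))
  have above (p : ℤ) (hbp : b ≤ p) : A p ≤ ⨆ r, ⨆ (_ : p ≤ r), A r ⊓ B (k - r) := calc
    A p ≤ lo := (h.antitone_left hbp).trans hb
    _ ≤ A p ⊓ B (k - p) := le_inf (h.le_left p) (h.symm.le_left _)
    _ ≤ _ := le_iSup₂_of_le p le_rfl le_rfl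
  rcases le_total b p with hbp | hpb
  · exact above p hbp
  induction p, hpb using Int.leInductionDown with
  | base => exact above b le_rfl
  | pred p _ ih =>
    have hA := h.eq_inf_sup_succ (p - 1)
    rw [sub_add_cancel] at hA
    rw [hA]
    exact sup_le (le_iSup₂_of_le (p - 1) le_rfl le_rfl)
      (ih.trans (biSup_mono fun r hr => by omega))

theorem inf_inf_iSup_le (h : OpposedFiltrations lo hi k A B) (p : ℤ) :
    A p ⊓ B (k - p) ⊓ ⨆ r, ⨆ (_ : r ≠ p), A r ⊓ B (k - r) ≤ lo := by
  have hsup : (⨆ r, ⨆ (_ : r ≠ p), A r ⊓ B (k - r)) ≤ A (p + 1) ⊔ B (k - p + 1) := by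
    refine iSup₂_le fun r hr => ?_
    rcases lt_or_gt_of_ne hr with hr | hr
    · exact le_sup_of_le_right (inf_le_right.trans (h.antitone_right (by omega)))
    · exact le_sup_of_le_left (inf_le_left.trans (h.antitone_left (by omega)))
  have hB : B (k - p) ⊓ (A (p + 1) ⊔ B (k - p + 1)) = B (k - p + 1) := by
    rw [inf_comm, sup_comm, sup_inf_assoc_of_le _ (h.antitone_right (by omega)),
      h.inf_eq_succ, sup_eq_left.mpr (h.symm.le_left _)]
  calc A p ⊓ B (k - p) ⊓ ⨆ r, ⨆ (_ : r ≠ p), A r ⊓ B (k - r)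
      ≤ A p ⊓ (B (k - p) ⊓ (A (p + 1) ⊔ B (k - p + 1))) := by
        rw [inf_assoc]; exact inf_le_inf_left _ (inf_le_inf_left _ hsup)
    _ = lo := by rw [hB, h.inf_eq]

end OpposedFiltrations

end CompleteLattice

section Deligne

variable {α : Type*} [CompleteLattice α]

/-- The filtration induced by `F` on `W n / W (n - 1)`, as elements of the interval
`[W (n - 1), W n]`. -/
def gradedPart (W F : ℤ → α) (n p : ℤ) : α := F p ⊓ W n ⊔ W (n - 1)

def deligneTail (W G : ℤ → α) (i : ℤ × ℤ) : α :=
  ⨆ j, ⨆ (_ : 2 ≤ j), G (i.2 - j + 1) ⊓ W (i.1 + i.2 - j)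

def deligneCofactor (W G : ℤ → α) (i : ℤ × ℤ) : α :=
  G i.2 ⊓ W (i.1 + i.2) ⊔ deligneTail W G i

/-- With `G q = (F q).map σ`, `deligneSummand W F G (p, q)` unfolds to `deligneI σ W F p q`. -/
def deligneSummand (W F G : ℤ → α) (i : ℤ × ℤ) : α :=
  F i.1 ⊓ W (i.1 + i.2) ⊓ deligneCofactor W G i

def deligneSpan (W F G : ℤ → α) (P : ℤ × ℤ → Prop) : α :=
  ⨆ i, ⨆ (_ : P i), deligneSummand W F G i

variable {W F G : ℤ → α}

theorem inf_le_deligneCofactor (hW : Monotone W) (hG : Antitone G) {t m : ℤ} {i : ℤ × ℤ}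
    (h : i.2 ≤ t ∧ m ≤ i.1 + i.2 ∨ m + 2 ≤ i.1 + i.2 ∧ m + 1 ≤ i.1 + t) :
    G t ⊓ W m ≤ deligneCofactor W G i := by
  rcases h with ⟨ht, hm⟩ | ⟨hm, ht⟩
  · exact le_sup_of_le_left (inf_le_inf (hG ht) (hW hm))
  · exact le_sup_of_le_right (le_iSup₂_of_le (i.1 + i.2 - m) (by omega)
      (inf_le_inf (hG (by omega)) (hW (by omega))))

theorem deligneCofactor_mono (hW : Monotone W) (hG : Antitone G) {i j : ℤ × ℤ}
    (hw : i.1 + i.2 ≤ j.1 + j.2) (h : j.2 ≤ i.2 ∨ i.1 < j.1) :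
    deligneCofactor W G i ≤ deligneCofactor W G j :=
  sup_le (inf_le_deligneCofactor hW hG (by omega))
    (iSup₂_le fun k hk => inf_le_deligneCofactor hW hG (by omega))

theorem deligneTail_le_W (hW : Monotone W) (i : ℤ × ℤ) :
    deligneTail W G i ≤ W (i.1 + i.2 - 2) :=
  iSup₂_le fun j hj => inf_le_right.trans (hW (by omega))

theorem deligneSummand_le_F (i : ℤ × ℤ) : deligneSummand W F G i ≤ F i.1 :=
  inf_le_left.trans inf_le_left

theorem deligneSummand_le_W (i : ℤ × ℤ) : deligneSummand W F G i ≤ W (i.1 + i.2) :=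
  inf_le_left.trans inf_le_right

theorem deligneSummand_le_cofactor (i : ℤ × ℤ) :
    deligneSummand W F G i ≤ deligneCofactor W G i :=
  inf_le_right

theorem deligneSummand_le_span {P : ℤ × ℤ → Prop} {i : ℤ × ℤ} (hi : P i) :
    deligneSummand W F G i ≤ deligneSpan W F G P :=
  le_iSup₂_of_le i hi le_rfl

theorem deligneSpan_mono {P Q : ℤ × ℤ → Prop} (h : ∀ i, P i → Q i) :
    deligneSpan W F G P ≤ deligneSpan W F G Q :=
  biSup_mono h

theorem deligneSpan_le_W (hW : Monotone W) {P : ℤ × ℤ → Prop} {n : ℤ}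
    (h : ∀ i, P i → i.1 + i.2 ≤ n) : deligneSpan W F G P ≤ W n :=
  iSup₂_le fun i hi => deligneSummand_le_W i |>.trans (hW (h i hi))

theorem deligneSummand_le_gradedPart_inf (hW : Monotone W) (i : ℤ × ℤ) :
    deligneSummand W F G i ≤
      gradedPart W F (i.1 + i.2) i.1 ⊓ gradedPart W G (i.1 + i.2) i.2 :=
  le_inf (le_sup_of_le_left inf_le_left) <| (deligneSummand_le_cofactor i).trans <|
    sup_le_sup_left ((deligneTail_le_W hW i).trans (hW (by omega))) _

/- The three statements proved together by strong induction on the weight `n`. -/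

def IsSpannedF (W F G : ℤ → α) (n : ℤ) : Prop :=
  ∀ p, F p ⊓ W n ≤ deligneSpan W F G fun i => i.1 + i.2 ≤ n ∧ p ≤ i.1

def IsSpannedG (W F G : ℤ → α) (n : ℤ) : Prop :=
  ∀ q, G q ⊓ W n ≤ deligneSpan W F G fun i => i.1 + i.2 ≤ n ∧ i.1 + q ≤ n

def IsDisjointPred (W F G : ℤ → α) (n : ℤ) : Prop :=
  ∀ i : ℤ × ℤ, i.1 + i.2 = n → Disjoint (deligneSummand W F G i) (W (n - 1))

theorem deligneTail_le_span (i : ℤ × ℤ) (hG : ∀ m < i.1 + i.2, IsSpannedG W F G m) :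
    deligneTail W G i ≤ deligneSpan W F G fun k => k.1 + k.2 ≤ i.1 + i.2 - 2 ∧ k.1 < i.1 :=
  iSup₂_le fun j hj => (hG _ (by omega) _).trans (deligneSpan_mono fun k hk => by omega)

structure OpposedOnGraded (W F G : ℤ → α) : Prop where
  monotone_W : Monotone W
  antitone_F : Antitone F
  antitone_G : Antitone G
  exists_W_eq_bot : ∃ a, W a = ⊥
  exists_W_eq_top : ∃ b, W b = ⊤
  exists_F_eq_top : ∃ a, F a = ⊤
  exists_F_eq_bot : ∃ b, F b = ⊥
  exists_G_eq_bot : ∃ b, G b = ⊥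
  gradedPart_sup : ∀ n p, gradedPart W F n p ⊔ gradedPart W G n (n - p + 1) = W n
  gradedPart_inf : ∀ n p, gradedPart W F n p ⊓ gradedPart W G n (n - p + 1) = W (n - 1)

namespace OpposedOnGraded

variable (h : OpposedOnGraded W F G)
include h

theorem opposed (n : ℤ) :
    OpposedFiltrations (W (n - 1)) (W n) n (gradedPart W F n) (gradedPart W G n) where
  antitone_left _ _ hpq := sup_le_sup_right (inf_le_inf_right _ (h.antitone_F hpq)) _
  antitone_right _ _ hpq := sup_le_sup_right (inf_le_inf_right _ (h.antitone_G hpq)) _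
  sup_eq := h.gradedPart_sup n
  inf_eq := h.gradedPart_inf n

theorem W_le_of_isSpannedF {n : ℤ} (hF : IsSpannedF W F G n) :
    W n ≤ deligneSpan W F G fun i => i.1 + i.2 ≤ n := by
  obtain ⟨a, ha⟩ := h.exists_F_eq_top
  simpa [ha] using (hF a).trans (deligneSpan_mono fun i hi => hi.1)

variable [IsModularLattice α]

theorem inf_gradedPart_le {n p q : ℤ} (hpq : p + q = n)
    (hW : W (n - 1) ≤ deligneSpan W F G fun i => i.1 + i.2 ≤ n - 1) :
    gradedPart W F n p ⊓ gradedPart W G n q ≤ deligneSummand W F G (p, q) ⊔ W (n - 1) := by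
  subst hpq
  set U := deligneSpan W F G fun i => i.1 + i.2 ≤ p + q - 1 ∧ p ≤ i.1
  set V := deligneSpan W F G fun i => i.1 + i.2 ≤ p + q - 1 ∧ i.1 < p
  have hUV : W (p + q - 1) ≤ U ⊔ V := hW.trans <| iSup₂_le fun i hi => by
    rcases le_or_gt p i.1 with hp | hp
    · exact le_sup_of_le_left (deligneSummand_le_span ⟨hi, hp⟩)
    · exact le_sup_of_le_right (deligneSummand_le_span ⟨hi, hp⟩)
  have hU : U ≤ F p ⊓ W (p + q) :=
    le_inf (iSup₂_le fun i hi => (deligneSummand_le_F i).trans (h.antitone_F hi.2))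
      (deligneSpan_le_W h.monotone_W fun i hi => by omega)
  have hV : V ≤ deligneCofactor W G (p, q) ⊓ W (p + q) :=
    le_inf (iSup₂_le fun i hi => (deligneSummand_le_cofactor i).trans
        (deligneCofactor_mono h.monotone_W h.antitone_G (by dsimp only; omega) (Or.inr hi.2)))
      (deligneSpan_le_W h.monotone_W fun i hi => by omega)
  calc gradedPart W F (p + q) p ⊓ gradedPart W G (p + q) q
      ≤ (F p ⊓ W (p + q) ⊔ V) ⊓ (deligneCofactor W G (p, q) ⊓ W (p + q) ⊔ U) :=
        inf_le_inf (sup_le le_sup_left (hUV.trans (sup_le_sup_right hU _)))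
          (sup_le (le_sup_of_le_left (le_inf le_sup_left inf_le_right))
            (hUV.trans (sup_comm U V ▸ sup_le_sup_right hV _)))
    _ = deligneSummand W F G (p, q) ⊔ (U ⊔ V) := by
        rw [sup_inf_sup_eq_of_le_of_le hU hV, inf_comm (deligneCofactor W G _), ← inf_assoc,
          inf_right_idem]
        rfl
    _ ≤ deligneSummand W F G (p, q) ⊔ W (p + q - 1) :=
        sup_le_sup_left (sup_le (deligneSpan_le_W h.monotone_W fun i hi => hi.1)
          (deligneSpan_le_W h.monotone_W fun i hi => hi.1)) _

theorem gradedPart_F_le {n : ℤ}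
    (hW : W (n - 1) ≤ deligneSpan W F G fun i => i.1 + i.2 ≤ n - 1) (p : ℤ) :
    gradedPart W F n p ≤ (deligneSpan W F G fun i => i.1 + i.2 = n ∧ p ≤ i.1) ⊔ W (n - 1) := by
  obtain ⟨b, hb⟩ := h.exists_F_eq_bot
  rw [(h.opposed n).eq_iSup_inf (b := b) (by simp [gradedPart, hb]) p]
  exact iSup₂_le fun r hr => (h.inf_gradedPart_le (by ring) hW).trans
    (sup_le_sup_right (deligneSummand_le_span ⟨by simp, hr⟩) _)

theorem gradedPart_G_le {n : ℤ}
    (hW : W (n - 1) ≤ deligneSpan W F G fun i => i.1 + i.2 ≤ n - 1) (q : ℤ) :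
    gradedPart W G n q ≤ (deligneSpan W F G fun i => i.1 + i.2 = n ∧ q ≤ i.2) ⊔ W (n - 1) := by
  obtain ⟨b, hb⟩ := h.exists_G_eq_bot
  rw [(h.opposed n).symm.eq_iSup_inf (b := b) (by simp [gradedPart, hb]) q]
  exact iSup₂_le fun s hs => inf_comm (gradedPart W G n s) _ ▸
    (h.inf_gradedPart_le (by ring) hW).trans
    (sup_le_sup_right (deligneSummand_le_span ⟨by simp, hs⟩) _)

theorem isSpannedF_of_pred {n : ℤ} (hF : IsSpannedF W F G (n - 1)) : IsSpannedF W F G n := by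
  intro p
  set R := deligneSpan W F G fun i => i.1 + i.2 ≤ n ∧ p ≤ i.1
  have hRF : R ≤ F p := iSup₂_le fun i hi => (deligneSummand_le_F i).trans (h.antitone_F hi.2)
  calc F p ⊓ W n ≤ (R ⊔ W (n - 1)) ⊓ F p :=
        le_inf ((le_sup_left.trans (h.gradedPart_F_le (h.W_le_of_isSpannedF hF) p)).trans
          (sup_le_sup_right (deligneSpan_mono fun i hi => ⟨hi.1.le, hi.2⟩) _)) inf_le_left
    _ = R ⊔ F p ⊓ W (n - 1) := by rw [sup_inf_assoc_of_le _ hRF, inf_comm]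
    _ ≤ R := sup_le le_rfl ((hF p).trans (deligneSpan_mono fun i hi => ⟨by omega, hi.2⟩))

theorem isSpannedG_of_lt {n : ℤ} (hF : IsSpannedF W F G (n - 1))
    (hG : ∀ m < n, IsSpannedG W F G m) : IsSpannedG W F G n := by
  intro t
  set X := deligneSpan W F G fun i => i.1 + i.2 = n ∧ t ≤ i.2
  have hX : X ≤ G t ⊓ W n ⊔ deligneTail W G (n - t, t) := by
    refine iSup₂_le fun i hi => (deligneSummand_le_cofactor i).trans <|
      (deligneCofactor_mono h.monotone_W h.antitone_G (i := i) (j := (n - t, t))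
        (by dsimp only; omega) (Or.inl hi.2)).trans (le_of_eq ?_)
    simp [deligneCofactor]
  have hXW : G t ⊓ W n ≤ X ⊔ W (n - 1) :=
    le_sup_left.trans (h.gradedPart_G_le (h.W_le_of_isSpannedF hF) t)
  have hTW : deligneTail W G (n - t, t) ≤ W (n - 1) :=
    (deligneTail_le_W h.monotone_W _).trans (h.monotone_W (by dsimp only; omega))
  have hT := deligneTail_le_span (F := F) (n - t, t) fun m hm => hG m (by simpa using hm)
  refine (le_sup_sup_inf_of_le hXW hX hTW).trans (sup_le (sup_le ?_ ?_) ?_)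
  · exact deligneSpan_mono fun i hi => ⟨hi.1.le, by omega⟩
  · exact hT.trans (deligneSpan_mono fun i hi => by dsimp only at hi; omega)
  · exact (inf_le_inf_right _ inf_le_left).trans
      ((hG (n - 1) (by omega) t).trans (deligneSpan_mono fun i hi => by omega))

theorem disjoint_iSup_of_isDisjointPred {i : ℤ × ℤ} (hK : IsDisjointPred W F G (i.1 + i.2)) :
    Disjoint (deligneSummand W F G i)
      (⨆ j, ⨆ (_ : j ≠ i ∧ j.1 + j.2 ≤ i.1 + i.2), deligneSummand W F G j) := by
  set n := i.1 + i.2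
  have hpiece (j : ℤ × ℤ) (hj : j.1 + j.2 = n) :
      deligneSummand W F G j ≤ gradedPart W F n j.1 ⊓ gradedPart W G n (n - j.1) := by
    rw [← hj, add_sub_cancel_left]; exact deligneSummand_le_gradedPart_inf h.monotone_W j
  have hrest : (⨆ j, ⨆ (_ : j ≠ i ∧ j.1 + j.2 ≤ n), deligneSummand W F G j) ≤
      ⨆ r, ⨆ (_ : r ≠ i.1), gradedPart W F n r ⊓ gradedPart W G n (n - r) := by
    refine iSup₂_le fun j ⟨hji, hjn⟩ => ?_
    rcases hjn.lt_or_eq with hjn | hjn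
    · refine le_iSup₂_of_le (i.1 + 1) (by omega) ?_
      refine (deligneSummand_le_W j).trans ((h.monotone_W (by omega : _ ≤ n - 1)).trans ?_)
      exact le_inf ((h.opposed n).le_left _) ((h.opposed n).symm.le_left _)
    · refine le_iSup₂_of_le j.1 (fun h1 => hji (Prod.ext h1 (by omega))) (hpiece j hjn)
  refine disjoint_iff_inf_le.mpr ((le_inf inf_le_left ?_).trans (hK i rfl).le_bot)
  exact (inf_le_inf (hpiece i rfl) hrest).trans ((h.opposed n).inf_inf_iSup_le i.1)

variable [IsCompactlyGenerated α]

theorem iSupIndep_deligneSummand_weight_le {n : ℤ} (hK : ∀ m ≤ n, IsDisjointPred W F G m) :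
    iSupIndep fun i : {i : ℤ × ℤ // i.1 + i.2 ≤ n} => deligneSummand W F G i :=
  iSupIndep_of_disjoint_iSup_le (fun i => i.1.1 + i.1.2) fun i =>
    (h.disjoint_iSup_of_isDisjointPred (hK _ i.2)).mono_right <| iSup₂_le fun j hj =>
      le_iSup₂_of_le j.1 ⟨Subtype.coe_ne_coe.mpr hj.1, hj.2⟩ le_rfl

theorem disjoint_deligneSpan {n : ℤ} (hK : ∀ m ≤ n, IsDisjointPred W F G m)
    {P Q : ℤ × ℤ → Prop} (hP : ∀ i, P i → i.1 + i.2 ≤ n) (hQ : ∀ i, Q i → i.1 + i.2 ≤ n)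
    (hPQ : ∀ i, P i → ¬Q i) : Disjoint (deligneSpan W F G P) (deligneSpan W F G Q) := by
  have hspan (R : ℤ × ℤ → Prop) (hR : ∀ i, R i → i.1 + i.2 ≤ n) : deligneSpan W F G R ≤
      ⨆ i ∈ {i : {i : ℤ × ℤ // i.1 + i.2 ≤ n} | R i}, deligneSummand W F G i :=
    iSup₂_le fun i hi => le_iSup₂_of_le ⟨i, hR i hi⟩ hi le_rfl
  exact ((h.iSupIndep_deligneSummand_weight_le hK).disjoint_biSup_biSup
    (Set.disjoint_left.mpr fun i hiP hiQ => hPQ i hiP hiQ)).mono (hspan P hP) (hspan Q hQ)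

theorem isDisjointPred_of_lt {n : ℤ} (hF : IsSpannedF W F G (n - 1))
    (hG : ∀ m < n, IsSpannedG W F G m) (hK : ∀ m < n, IsDisjointPred W F G m) :
    IsDisjointPred W F G n := by
  intro i hi
  have hF' : deligneSummand W F G i ⊓ W (n - 1) ≤
      deligneSpan W F G fun k => k.1 + k.2 ≤ n - 1 ∧ i.1 ≤ k.1 :=
    (inf_le_inf_right _ (deligneSummand_le_F i)).trans (hF i.1)
  have hG' : deligneSummand W F G i ⊓ W (n - 1) ≤
      deligneSpan W F G fun k => k.1 + k.2 ≤ n - 1 ∧ k.1 < i.1 := by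
    have hTW : deligneTail W G i ≤ W (n - 1) :=
      (deligneTail_le_W h.monotone_W i).trans (h.monotone_W (by omega))
    calc deligneSummand W F G i ⊓ W (n - 1)
        ≤ (deligneTail W G i ⊔ G i.2 ⊓ W (i.1 + i.2)) ⊓ W (n - 1) :=
          inf_le_inf_right _ ((deligneSummand_le_cofactor i).trans (sup_comm _ _).le)
      _ = deligneTail W G i ⊔ G i.2 ⊓ W (i.1 + i.2) ⊓ W (n - 1) := sup_inf_assoc_of_le _ hTW
      _ ≤ _ := sup_le
          ((deligneTail_le_span i fun m hm => hG m (by omega)).trans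
            (deligneSpan_mono fun k hk => by omega))
          ((inf_le_inf_right _ inf_le_left).trans
            ((hG (n - 1) (by omega) i.2).trans (deligneSpan_mono fun k hk => by omega)))
  refine disjoint_iff_inf_le.mpr ((le_inf hF' hG').trans (disjoint_iff_inf_le.mp ?_))
  exact h.disjoint_deligneSpan (fun m hm => hK m (by omega)) (fun k hk => hk.1) (fun k hk => hk.1)
    fun k hk₁ hk₂ => by omega

theorem isSpannedF_and_isSpannedG_and_isDisjointPred (n : ℤ) :
    IsSpannedF W F G n ∧ IsSpannedG W F G n ∧ IsDisjointPred W F G n := by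
  obtain ⟨a, ha⟩ := h.exists_W_eq_bot
  induction n using Int.strongRec (m := a + 1) with
  | lt n hn =>
    have hWn : W n = ⊥ := le_bot_iff.mp (ha ▸ h.monotone_W (by omega))
    refine ⟨fun p => by simp [hWn], fun q => by simp [hWn], fun i hi => ?_⟩
    exact (disjoint_bot_left.mono_left (hWn ▸ hi ▸ deligneSummand_le_W i))
  | ge n _ ih =>
    have hF := (ih (n - 1) (by omega)).1
    have hG := fun m hm => (ih m hm).2.1
    exact ⟨h.isSpannedF_of_pred hF, h.isSpannedG_of_lt hF hG,
      h.isDisjointPred_of_lt hF hG fun m hm => (ih m hm).2.2⟩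

theorem iSupIndep_deligneSummand : iSupIndep (deligneSummand W F G) :=
  iSupIndep_of_disjoint_iSup_le (fun i => i.1 + i.2) fun _ =>
    h.disjoint_iSup_of_isDisjointPred (h.isSpannedF_and_isSpannedG_and_isDisjointPred _).2.2

theorem deligneSpan_weight_le_eq_W (k : ℤ) : (deligneSpan W F G fun i => i.1 + i.2 ≤ k) = W k :=
  le_antisymm (deligneSpan_le_W h.monotone_W fun _ hi => hi)
    (h.W_le_of_isSpannedF (h.isSpannedF_and_isSpannedG_and_isDisjointPred k).1)

theorem deligneSpan_fst_ge_eq_F (p : ℤ) : (deligneSpan W F G fun i => p ≤ i.1) = F p := by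
  obtain ⟨b, hb⟩ := h.exists_W_eq_top
  refine le_antisymm (iSup₂_le fun i hi => (deligneSummand_le_F i).trans (h.antitone_F hi)) ?_
  calc F p = F p ⊓ W b := by rw [hb, inf_top_eq]
    _ ≤ _ := ((h.isSpannedF_and_isSpannedG_and_isDisjointPred b).1 p).trans
      (deligneSpan_mono fun _ hi => hi.2)

end OpposedOnGraded

end Deligne

theorem IsMixedHodgeStructure.opposedOnGraded {H : Type*} [AddCommGroup H] [Module ℂ H]
    {σ : H →ₛₗ[starRingEnd ℂ] H} {W F : ℤ → Submodule ℂ H}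
    (hM : IsMixedHodgeStructure σ W F) :
    OpposedOnGraded W F fun q => (F q).map σ where
  monotone_W := hM.w_mono
  antitone_F _ _ hpq := hM.f_anti _ _ hpq
  antitone_G _ _ hpq := Submodule.map_mono (hM.f_anti _ _ hpq)
  exists_W_eq_bot := hM.w_bot.imp fun a ha => ha a le_rfl
  exists_W_eq_top := hM.w_top.imp fun b hb => hb b le_rfl
  exists_F_eq_top := hM.f_top.imp fun a ha => ha a le_rfl
  exists_F_eq_bot := hM.f_bot.imp fun b hb => hb b le_rfl
  exists_G_eq_bot := hM.f_bot.imp fun b hb => by rw [hb b le_rfl, Submodule.map_bot]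
  gradedPart_sup n p := by
    rw [gradedPart, gradedPart, sup_sup_sup_comm, sup_idem]; exact hM.gr_opposed_sup n p
  gradedPart_inf n p := le_antisymm (hM.gr_opposed_inf n p) (le_inf le_sup_right le_sup_right)

theorem deligne_splitting_general
    (H : Type*) [AddCommGroup H] [Module ℂ H]
    (σ : H →ₛₗ[starRingEnd ℂ] H)
    (W F : ℤ → Submodule ℂ H)
    (hMHS : IsMixedHodgeStructure σ W F) :
    (∀ k : ℤ,
      (iSupIndep fun x : {x : ℤ × ℤ // x.1 + x.2 ≤ k} =>
        deligneI σ W F x.1.1 x.1.2) ∧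
      (⨆ x : {x : ℤ × ℤ // x.1 + x.2 ≤ k}, deligneI σ W F x.1.1 x.1.2) = W k) ∧
    (∀ p : ℤ,
      (iSupIndep fun x : {x : ℤ × ℤ // p ≤ x.1} =>
        deligneI σ W F x.1.1 x.1.2) ∧
      (⨆ x : {x : ℤ × ℤ // p ≤ x.1}, deligneI σ W F x.1.1 x.1.2) = F p) := by
  have h := hMHS.opposedOnGraded
  have hind : iSupIndep fun i : ℤ × ℤ => deligneI σ W F i.1 i.2 := h.iSupIndep_deligneSummand
  refine ⟨fun k => ⟨hind.comp Subtype.val_injective, ?_⟩,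
    fun p => ⟨hind.comp Subtype.val_injective, ?_⟩⟩
  · rw [← h.deligneSpan_weight_le_eq_W k, deligneSpan, iSup_subtype]
    rfl
  · rw [← h.deligneSpan_fst_ge_eq_F p, deligneSpan, iSup_subtype]
    rfl

/-- **Definition-Proposition 2.7 (Deligne splitting).** For a mixed Hodge structure
`(W, F)` on `(H, σ)` one has the internal direct sum decompositions
`W_k = ⊕_{p+q ≤ k} I^{p,q}` and `F^p = ⊕_{r ≥ p} I^{r,q}`. -/
theorem deligne_splitting
    (H : Type*) [AddCommGroup H] [Module ℂ H] [FiniteDimensional ℂ H]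
    (σ : H →ₛₗ[starRingEnd ℂ] H) (hσinv : ∀ v, σ (σ v) = v)
    (W F : ℤ → Submodule ℂ H)
    (hMHS : IsMixedHodgeStructure σ W F) :
    (∀ k : ℤ,
      (iSupIndep fun x : {x : ℤ × ℤ // x.1 + x.2 ≤ k} =>
        deligneI σ W F x.1.1 x.1.2) ∧
      (⨆ x : {x : ℤ × ℤ // x.1 + x.2 ≤ k}, deligneI σ W F x.1.1 x.1.2) = W k) ∧
    (∀ p : ℤ,
      (iSupIndep fun x : {x : ℤ × ℤ // p ≤ x.1} =>
        deligneI σ W F x.1.1 x.1.2) ∧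
      (⨆ x : {x : ℤ × ℤ // p ≤ x.1}, deligneI σ W F x.1.1 x.1.2) = F p) :=
  deligne_splitting_general H σ W F hMHS
end
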